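/- arXiv:1907.08743 — 5 statements merged into one kernel-verified Lean document; each statement's English description precedes it below -/
import Mathlib

section
/- Expander mixing implication for error reduction: let G be a d-regular graph on n vertices with spectral expansion λ (all eigenvalues other than the top one of the normalized adjacency matrix have absolute value at most λ). Let B ⊆ V with |B| ≤ ηn for some η ∈ (0,1), and let B̃ be the set of vertices all of whose d neighbors lie in B. Then |B̃| ≤ λ²·η/(1−η)² · n. -/
open Finset

set_option maxHeartbeats 1000000

/-- Expander mixing implication for error reduction: in a `d`-regular graph on `n` vertices
with spectral expansion `λ` (expressed via the Expander Mixing Lemma for the ordered edge-count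
function `e`), any set `B` of at most `η n` vertices can have at most `λ²·η/(1-η)²·n` vertices
`B̃` all of whose `d` neighbors lie in `B` (captured by `e(B̃, B) ≥ d·|B̃|`). -/
theorem expander_mixing_bad_set {V : Type*} [Fintype V]
    (n d : ℕ) (lam η : ℝ)
    (hn : Fintype.card V = n) (hn0 : 0 < n) (hd : 0 < d)
    (hlam : 0 ≤ lam) (hη : η ∈ Set.Ioo (0 : ℝ) 1)
    (e : Finset V → Finset V → ℕ)
    (hmix : ∀ S T : Finset V,
      |((e S T : ℝ) / ((d : ℝ) * n)) - ((S.card : ℝ) / n) * ((T.card : ℝ) / n)|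
        ≤ lam * Real.sqrt (((S.card : ℝ) / n) * ((T.card : ℝ) / n)))
    (B Btil : Finset V)
    (hB : (B.card : ℝ) ≤ η * n)
    (hBtil : (d : ℝ) * (Btil.card : ℝ) ≤ (e Btil B : ℝ)) :
    (Btil.card : ℝ) ≤ lam ^ 2 * η / (1 - η) ^ 2 * n := by
  obtain ⟨hη0, hη1⟩ := hη
  have hn0' : (0 : ℝ) < n := by exact_mod_cast hn0
  have hd0' : (0 : ℝ) < d := by exact_mod_cast hd
  set x : ℝ := (Btil.card : ℝ) / n with hx
  set b : ℝ := (B.card : ℝ) / n with hb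
  have hx0 : 0 ≤ x := div_nonneg (Nat.cast_nonneg _) hn0'.le
  have hb0 : 0 ≤ b := div_nonneg (Nat.cast_nonneg _) hn0'.le
  have hbη : b ≤ η := by
    rw [hb, div_le_iff₀ hn0']
    linarith
  have h1η : (0 : ℝ) < 1 - η := by linarith
  -- e/(dn) ≥ x
  have hedn : x ≤ (e Btil B : ℝ) / ((d : ℝ) * n) := by
    rw [hx, div_le_div_iff₀ hn0' (by positivity)]
    nlinarith
  have hm := hmix Btil B
  have hkey : x * (1 - η) ≤ lam * Real.sqrt (x * η) := by
    have h1 : x * (1 - b) ≤ lam * Real.sqrt (x * b) := by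
      have := abs_le.mp hm
      nlinarith [this.2]
    have h2 : Real.sqrt (x * b) ≤ Real.sqrt (x * η) :=
      Real.sqrt_le_sqrt (by nlinarith)
    nlinarith [Real.sqrt_nonneg (x * b), mul_le_mul_of_nonneg_left h2 hlam]
  have hsq : (x * (1 - η)) ^ 2 ≤ lam ^ 2 * (x * η) := by
    have hrhs0 : 0 ≤ lam * Real.sqrt (x * η) := by positivity
    have := mul_self_le_mul_self (by positivity) hkey
    calc (x * (1 - η)) ^ 2 ≤ (lam * Real.sqrt (x * η)) ^ 2 := by
          nlinarith
      _ = lam ^ 2 * (x * η) := by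
          rw [mul_pow, Real.sq_sqrt (by positivity)]
  have hxb : x ≤ lam ^ 2 * η / (1 - η) ^ 2 := by
    rcases eq_or_lt_of_le hx0 with h | h
    · rw [← h]; positivity
    · rw [le_div_iff₀ (by positivity)]
      have h2 : x * (x * (1 - η) ^ 2) ≤ x * (lam ^ 2 * η) := by nlinarith [hsq]
      exact le_of_mul_le_mul_left h2 h
  rw [hx, div_le_div_iff₀ hn0' (by positivity)] at hxb
  rw [div_mul_eq_mul_div, le_div_iff₀ (by positivity)]
  linarith [hxb]
end

section
/- Deterministic amplification for one-sided error: fix s ∈ ℕ and η, γ ∈ (0,1). Suppose there exist d and functions π_1,…,π_d : {0,1}^s → {0,1}^s arising from a d-regular graph on 2^s vertices with spectral expansion λ ≤ (1−η)·sqrt(γ/η) (π_i(σ) is the i-th neighbor of vertex σ). Let X₀ ⊆ X, A : X × {0,1}^s → Ω, and E ⊆ Ω satisfy: (i) for x ∈ X₀ and all σ, A(x,σ) ∈ E; (ii) for x ∉ X₀, P_σ(A(x,σ) ∈ E) ≤ η, where σ is uniform on {0,1}^s. Then: (i) for x ∈ X₀, A(x, π_i(σ)) ∈ E for all i and σ;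 (ii) for x ∉ X₀, P_σ(∀ i ∈ [d], A(x, π_i(σ)) ∈ E) ≤ γ. -/
open Finset
open scoped Classical

/-- Deterministic amplification for one-sided error via an expander on `{0,1}^s`:
if the neighbor maps `π i` come from a `d`-regular graph with spectral expansion
`λ ≤ (1-η)·√(γ/η)` (expressed via the Expander Mixing Lemma for the associated ordered
edge-count), then perfect completeness is preserved and the soundness error drops
from `η` to `γ`. -/
theorem deterministic_amplification {X Ω' : Type*}
    (s d : ℕ) (hd : 0 < d) (η γ lam : ℝ)
    (hη : η ∈ Set.Ioo (0 : ℝ) 1) (hγ : γ ∈ Set.Ioo (0 : ℝ) 1)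
    (hlam : 0 ≤ lam) (hlamle : lam ≤ (1 - η) * Real.sqrt (γ / η))
    (π : Fin d → (Fin s → Bool) → (Fin s → Bool))
    (hmix : ∀ S T : Finset (Fin s → Bool),
      |((∑ σ ∈ S, ((Finset.univ.filter fun i : Fin d => π i σ ∈ T).card : ℝ)) / ((d : ℝ) * 2 ^ s))
          - ((S.card : ℝ) / 2 ^ s) * ((T.card : ℝ) / 2 ^ s)|
        ≤ lam * Real.sqrt (((S.card : ℝ) / 2 ^ s) * ((T.card : ℝ) / 2 ^ s)))
    (X₀ : Set X) (A : X → (Fin s → Bool) → Ω') (E : Set Ω')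
    (hcomplete : ∀ x ∈ X₀, ∀ σ, A x σ ∈ E)
    (hsound : ∀ x ∉ X₀,
      ((Finset.univ.filter fun σ : Fin s → Bool => A x σ ∈ E).card : ℝ) ≤ η * 2 ^ s) :
    (∀ x ∈ X₀, ∀ (i : Fin d) (σ : Fin s → Bool), A x (π i σ) ∈ E) ∧
      (∀ x ∉ X₀,
        ((Finset.univ.filter fun σ : Fin s → Bool => ∀ i : Fin d, A x (π i σ) ∈ E).card : ℝ)
          ≤ γ * 2 ^ s) := by
  obtain ⟨hη0, hη1⟩ := hη
  obtain ⟨hγ0, hγ1⟩ := hγ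
  have hN : (0:ℝ) < 2 ^ s := by positivity
  refine ⟨fun x hx i σ => hcomplete x hx _, fun x hx => ?_⟩
  set B := Finset.univ.filter fun σ : Fin s → Bool => A x σ ∈ E with hB
  set S := Finset.univ.filter fun σ : Fin s → Bool => ∀ i : Fin d, A x (π i σ) ∈ E with hS
  have hBcard : (B.card : ℝ) ≤ η * 2 ^ s := hsound x hx
  have hsum : (∑ σ ∈ S, ((Finset.univ.filter fun i : Fin d => π i σ ∈ B).card : ℝ))
      = (d : ℝ) * S.card := by
    have h1 : ∀ σ ∈ S, ((Finset.univ.filter fun i : Fin d => π i σ ∈ B).card : ℝ) = (d : ℝ) := by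
      intro σ hσ
      have hσ' := (Finset.mem_filter.mp hσ).2
      have : (Finset.univ.filter fun i : Fin d => π i σ ∈ B) = Finset.univ := by
        apply Finset.filter_true_of_mem
        intro i _
        simp only [hB, Finset.mem_filter, Finset.mem_univ, true_and]
        exact hσ' i
      rw [this, Finset.card_univ, Fintype.card_fin]
    rw [Finset.sum_congr rfl h1, Finset.sum_const, nsmul_eq_mul, mul_comm]
  set α : ℝ := (S.card : ℝ) / 2 ^ s with hα
  set β : ℝ := (B.card : ℝ) / 2 ^ s with hβ
  have hα0 : 0 ≤ α := by positivity
  have hβ0 : 0 ≤ β := by positivity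
  have hβη : β ≤ η := by
    rw [hβ, div_le_iff₀ hN]; linarith
  have hmixSB := hmix S B
  rw [hsum] at hmixSB
  have hd0 : (0:ℝ) < d := by exact_mod_cast hd
  have hfrac : (d : ℝ) * S.card / ((d : ℝ) * 2 ^ s) = α := by
    rw [hα, mul_div_mul_left _ _ (ne_of_gt hd0)]
  rw [hfrac] at hmixSB
  have key : α * (1 - β) ≤ lam * Real.sqrt (α * β) := by
    have : |α - α * β| = α * (1 - β) := by
      rw [abs_of_nonneg]
      · ring
      · nlinarith
    linarith [this ▸ hmixSB]
  -- bound the RHS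
  have hsq1 : Real.sqrt (α * β) ≤ Real.sqrt (α * η) :=
    Real.sqrt_le_sqrt (by nlinarith)
  have hsqeq : Real.sqrt (γ / η) * Real.sqrt (α * η) = Real.sqrt (γ * α) := by
    rw [← Real.sqrt_mul (by positivity)]
    congr 1
    field_simp
  have key2 : α * (1 - η) ≤ (1 - η) * Real.sqrt (γ * α) := by
    have h1 : α * (1 - η) ≤ α * (1 - β) := by nlinarith
    have h2 : lam * Real.sqrt (α * β) ≤ lam * Real.sqrt (α * η) :=
      mul_le_mul_of_nonneg_left hsq1 hlam
    have h3 : lam * Real.sqrt (α * η) ≤ (1 - η) * Real.sqrt (γ / η) * Real.sqrt (α * η) := by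
      apply mul_le_mul_of_nonneg_right hlamle (Real.sqrt_nonneg _)
    calc α * (1 - η) ≤ lam * Real.sqrt (α * η) := by linarith
      _ ≤ (1 - η) * Real.sqrt (γ / η) * Real.sqrt (α * η) := h3
      _ = (1 - η) * Real.sqrt (γ * α) := by rw [mul_assoc, hsqeq]
  have key3 : α ≤ Real.sqrt (γ * α) := by
    have h1η : 0 < 1 - η := by linarith
    nlinarith
  have hαγ : α ≤ γ := by
    have h := Real.sq_sqrt (show 0 ≤ γ * α by positivity)
    nlinarith [Real.sqrt_nonneg (γ * α)]
  rw [hα, div_le_iff₀ hN] at hαγ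
  linarith
end

section
/- One-bit isometry: there exist absolute constants α > 0, δ₀ ∈ (0,1), c₀ ∈ ℕ and, for each s, fixed subsets {S_u}_{u∈U} of [2^s] with |U| = 2^{s+c₀}, such that for every p, q ∈ [0,1]^{2^s}: P(|p(S_U) − q(S_U)| ≥ α·‖p − q‖₂) ≥ 1 − δ₀, where U is uniform on U and p(S) = ∑_{i∈S} p_i. -/
/-!
Take `m = 2 ^ (s + 17)` random sign vectors `r_i ∈ {±1}^(2^s)` and, for each of them, the two
sets `S_i^± = {r_i = ±1}`. Since `x(S_i^+) - x(S_i^-) = ⟪r_i, x⟫`, it suffices to find signs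
such that, for every `x`, at least `m / 32` rows satisfy `|⟪r_i, x⟫| ≥ ‖x‖ / 16`.

For a fixed unit vector `y`, a Rademacher sum `⟪r, y⟫` has second moment `1` and fourth moment
at most `3`, so `|⟪r, y⟫| ≥ 1 / 8` with probability at least `15 / 64`; by a Chernoff bound,
more than `m / 16` rows are that large except with probability `exp (-7 m / 128)`. This beats a
union bound over a `1 / 1024`-net of the sphere, of size `exp (2048 · 2 ^ s)`. Sub-Gaussian tails
of bilinear forms over two `1 / 4`-nets bound the operator norm of the sign matrix by
`(32 / 3) √m`, which passes from the net to every unit vector at the cost of `m / 36` rows.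
-/

open Finset Real Metric MeasureTheory

namespace OneBitIsometry

theorem card_filter_le_exp_neg_mul_sum_exp {α : Type*} (s : Finset α) (f : α → ℝ) (a : ℝ) :
    (#(s.filter fun x => a ≤ f x) : ℝ) ≤ exp (-a) * ∑ x ∈ s, exp (f x) := by
  rw [mul_sum]
  calc (#(s.filter fun x => a ≤ f x) : ℝ) = ∑ x ∈ s.filter (fun x => a ≤ f x), 1 := by simp
    _ ≤ ∑ x ∈ s.filter (fun x => a ≤ f x), exp (-a) * exp (f x) := by
      refine sum_le_sum fun x hx => ?_
      rw [← exp_add, one_le_exp_iff]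
      linarith [(mem_filter.1 hx).2]
    _ ≤ ∑ x ∈ s, exp (-a) * exp (f x) :=
      sum_le_sum_of_subset_of_nonneg (filter_subset _ _) fun _ _ _ => by positivity

theorem cast_card_biUnion_le {α β : Type*} [DecidableEq β] {s : Finset α} {t : α → Finset β}
    {B : ℝ} (h : ∀ a ∈ s, (#(t a) : ℝ) ≤ B) : (#(s.biUnion t) : ℝ) ≤ #s * B :=
  calc (#(s.biUnion t) : ℝ) ≤ ∑ a ∈ s, (#(t a) : ℝ) := by exact_mod_cast card_biUnion_le
    _ ≤ ∑ _ ∈ s, B := sum_le_sum h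
    _ = #s * B := by simp

theorem one_add_pow_le_exp_mul {x : ℝ} (hx : 0 ≤ x) (d : ℕ) : (1 + x) ^ d ≤ exp (d * x) := by
  rw [exp_nat_mul]
  exact pow_le_pow_left₀ (by positivity) (by linarith [add_one_le_exp x]) d

theorem exists_notMem_notMem_of_card_le_of_card_le {α : Type*} [Fintype α] [DecidableEq α]
    {s t : Finset α} {B : ℝ} (hs : (#s : ℝ) ≤ B) (ht : (#t : ℝ) ≤ B)
    (hB : 2 * B < Fintype.card α) : ∃ a, a ∉ s ∧ a ∉ t := by
  obtain ⟨a, -, ha⟩ := exists_mem_notMem_of_card_lt_card (s := s ∪ t) (t := univ) <| by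
    have : (#(s ∪ t) : ℝ) ≤ #s + #t := mod_cast card_union_le s t
    rw [card_univ]
    exact_mod_cast (show (#(s ∪ t) : ℝ) < Fintype.card α by linarith)
  exact ⟨a, fun h => ha (mem_union_left t h), fun h => ha (mem_union_right s h)⟩

noncomputable def rademacher (b : Bool) : ℝ := if b then 1 else -1

@[simp] theorem rademacher_true : rademacher true = 1 := rfl
@[simp] theorem rademacher_false : rademacher false = -1 := rfl

section Rademacher

variable {ι : Type*}

noncomputable def rademacherSum (s : Finset ι) (c : ι → ℝ) (ω : ι → Bool) : ℝ :=
  ∑ j ∈ s, c j * rademacher (ω j)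

theorem rademacherSum_neg (s : Finset ι) (c : ι → ℝ) (ω : ι → Bool) :
    rademacherSum s (-c) ω = -rademacherSum s c ω := by
  simp [rademacherSum, sum_neg_distrib]

variable [DecidableEq ι]

theorem rademacherSum_insert_update {s : Finset ι} {a : ι} (ha : a ∉ s) (c : ι → ℝ)
    (ω : ι → Bool) (b : Bool) :
    rademacherSum (insert a s) c (Function.update ω a b)
      = rademacherSum s c ω + c a * rademacher b := by
  rw [rademacherSum, sum_insert ha, Function.update_self, add_comm]
  congr 1
  exact sum_congr rfl fun j hj => by rw [Function.update_of_ne (ne_of_mem_of_not_mem hj ha)]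

variable [Fintype ι]

theorem sum_update_true_add_update_false (a : ι) (f : (ι → Bool) → ℝ) :
    ∑ ω : ι → Bool, (f (Function.update ω a true) + f (Function.update ω a false))
      = 2 * ∑ ω, f ω := by
  let flip : Equiv.Perm (ι → Bool) :=
    Function.Involutive.toPerm (fun ω => Function.update ω a (!ω a)) fun ω => by
      ext j; by_cases h : j = a <;> simp_all
  have hpair (ω : ι → Bool) :
      f ω + f (flip ω) = f (Function.update ω a true) + f (Function.update ω a false) := by
    have hω (b : Bool) (hb : ω a = b) : Function.update ω a b = ω := by
      rw [← hb, Function.update_eq_self]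
    have hflip : flip ω = Function.update ω a (!ω a) := rfl
    cases h : ω a
    · simp [hflip, h, hω false h, add_comm]
    · simp [hflip, h, hω true h]
  rw [← sum_congr rfl fun ω _ => hpair ω, sum_add_distrib, Equiv.sum_comp flip f]
  ring

theorem two_mul_sum_rademacherSum_insert {s : Finset ι} {a : ι} (ha : a ∉ s) (c : ι → ℝ)
    (F : ℝ → ℝ) :
    2 * ∑ ω, F (rademacherSum (insert a s) c ω)
      = ∑ ω, (F (rademacherSum s c ω + c a) + F (rademacherSum s c ω - c a)) := by
  rw [← sum_update_true_add_update_false a]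
  simp [rademacherSum_insert_update ha, sub_eq_add_neg]

theorem sum_rademacherSum_sq (s : Finset ι) (c : ι → ℝ) :
    ∑ ω, rademacherSum s c ω ^ 2 = 2 ^ Fintype.card ι * ∑ j ∈ s, c j ^ 2 := by
  induction s using Finset.induction_on with
  | empty => simp [rademacherSum]
  | insert a s ha ih =>
    have h := two_mul_sum_rademacherSum_insert ha c (· ^ 2)
    have hpt (x : ℝ) : (x + c a) ^ 2 + (x - c a) ^ 2 = 2 * x ^ 2 + 2 * c a ^ 2 := by ring
    simp only [hpt, sum_add_distrib, ← mul_sum, ih, sum_const, card_univ, Fintype.card_fun,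
      Fintype.card_bool, nsmul_eq_mul] at h
    rw [sum_insert ha]
    push_cast at h
    linarith

theorem sum_rademacherSum_pow_four_le (s : Finset ι) (c : ι → ℝ) :
    ∑ ω, rademacherSum s c ω ^ 4 ≤ 3 * 2 ^ Fintype.card ι * (∑ j ∈ s, c j ^ 2) ^ 2 := by
  induction s using Finset.induction_on with
  | empty => simp [rademacherSum]
  | insert a s ha ih =>
    have h := two_mul_sum_rademacherSum_insert ha c (· ^ 4)
    have hpt (x : ℝ) :
        (x + c a) ^ 4 + (x - c a) ^ 4 = 2 * x ^ 4 + 12 * c a ^ 2 * x ^ 2 + 2 * c a ^ 4 := by ring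
    simp only [hpt, sum_add_distrib, ← mul_sum, sum_rademacherSum_sq, sum_const, card_univ,
      Fintype.card_fun, Fintype.card_bool, nsmul_eq_mul] at h
    rw [sum_insert ha]
    push_cast at h
    have hs : 0 ≤ ∑ j ∈ s, c j ^ 2 := sum_nonneg fun _ _ => sq_nonneg _
    have hN : (0 : ℝ) < 2 ^ Fintype.card ι := by positivity
    nlinarith [mul_nonneg (mul_nonneg hN.le (sq_nonneg (c a))) hs, pow_nonneg (sq_nonneg (c a)) 2]

theorem sum_exp_rademacherSum_le (s : Finset ι) (c : ι → ℝ) :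
    ∑ ω, exp (rademacherSum s c ω) ≤ 2 ^ Fintype.card ι * exp ((∑ j ∈ s, c j ^ 2) / 2) := by
  induction s using Finset.induction_on with
  | empty => simp [rademacherSum]
  | insert a s ha ih =>
    have h := two_mul_sum_rademacherSum_insert ha c exp
    have hpt (x : ℝ) : exp (x + c a) + exp (x - c a) ≤ 2 * exp (c a ^ 2 / 2) * exp x := by
      have := cosh_le_exp_half_sq (c a)
      rw [cosh_eq] at this
      rw [exp_add, exp_sub, div_eq_mul_inv, ← exp_neg]
      nlinarith [exp_pos x]
    have hsum := sum_le_sum fun ω (_ : ω ∈ univ) => hpt (rademacherSum s c ω)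
    rw [← h, ← mul_sum] at hsum
    rw [sum_insert ha, add_div, exp_add]
    nlinarith [mul_le_mul_of_nonneg_left ih (by positivity : (0 : ℝ) ≤ 2 * exp (c a ^ 2 / 2))]

theorem card_le_rademacherSum_le {c : ι → ℝ} (hc : ∑ j, c j ^ 2 ≤ 1) {a : ℝ} (ha : 0 ≤ a) :
    (#{ω | a ≤ rademacherSum univ c ω} : ℝ) ≤ exp (-(a ^ 2 / 2)) * 2 ^ Fintype.card ι := by
  have hsub : univ.filter (fun ω => a ≤ rademacherSum univ c ω) ⊆
      univ.filter (fun ω => a ^ 2 ≤ rademacherSum univ (fun j => a * c j) ω) := by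
    intro ω
    simp only [mem_filter, mem_univ, true_and]
    intro h
    have hac : rademacherSum univ (fun j => a * c j) ω = a * rademacherSum univ c ω := by
      simp [rademacherSum, mul_assoc, mul_sum]
    nlinarith
  have hsq : ∑ j, (a * c j) ^ 2 ≤ a ^ 2 := by
    simpa [mul_pow, ← mul_sum] using mul_le_mul_of_nonneg_left hc (sq_nonneg a)
  calc (#{ω | a ≤ rademacherSum univ c ω} : ℝ)
      ≤ #{ω | a ^ 2 ≤ rademacherSum univ (fun j => a * c j) ω} := by
        exact_mod_cast card_le_card hsub
    _ ≤ exp (-a ^ 2) * (2 ^ Fintype.card ι * exp ((∑ j, (a * c j) ^ 2) / 2)) :=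
        (card_filter_le_exp_neg_mul_sum_exp _ _ _).trans
          (mul_le_mul_of_nonneg_left (sum_exp_rademacherSum_le _ _) (exp_pos _).le)
    _ ≤ exp (-a ^ 2) * (2 ^ Fintype.card ι * exp (a ^ 2 / 2)) := by gcongr
    _ = exp (-(a ^ 2 / 2)) * 2 ^ Fintype.card ι := by
        rw [mul_left_comm, ← exp_add]
        ring_nf

theorem card_le_abs_rademacherSum_le {c : ι → ℝ} (hc : ∑ j, c j ^ 2 ≤ 1) {a : ℝ} (ha : 0 ≤ a) :
    (#{ω | a ≤ |rademacherSum univ c ω|} : ℝ) ≤ 2 * exp (-(a ^ 2 / 2)) * 2 ^ Fintype.card ι := by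
  have hsub : univ.filter (fun ω => a ≤ |rademacherSum univ c ω|) ⊆
      univ.filter (fun ω => a ≤ rademacherSum univ c ω) ∪
        univ.filter (fun ω => a ≤ rademacherSum univ (-c) ω) := by
    intro ω
    simp only [mem_union, mem_filter, mem_univ, true_and, rademacherSum_neg]
    exact le_abs.1
  have hc' : ∑ j, (-c) j ^ 2 ≤ 1 := by simpa using hc
  calc (#{ω | a ≤ |rademacherSum univ c ω|} : ℝ)
      ≤ #{ω | a ≤ rademacherSum univ c ω} + #{ω | a ≤ rademacherSum univ (-c) ω} := by
        exact_mod_cast (card_le_card hsub).trans (card_union_le _ _)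
    _ ≤ _ := by
        linarith [card_le_rademacherSum_le hc ha, card_le_rademacherSum_le hc' ha]

theorem le_card_le_abs_rademacherSum {c : ι → ℝ} (hc : ∑ j, c j ^ 2 = 1) (θ : ℝ) :
    (1 / 4 - θ ^ 2) * 2 ^ Fintype.card ι ≤ #{ω | θ ≤ |rademacherSum univ c ω|} := by
  -- Paley–Zygmund in pointwise form.
  have hpt (x : ℝ) : x ^ 2 - x ^ 4 / 4 - θ ^ 2 ≤ if θ ≤ |x| then 1 else 0 := by
    split_ifs with h
    · nlinarith [sq_nonneg (x ^ 2 - 2), sq_nonneg θ]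
    · nlinarith [not_le.1 h, sq_abs x, abs_nonneg x, sq_nonneg (x ^ 2)]
  have h2 := sum_rademacherSum_sq univ c
  have h4 := sum_rademacherSum_pow_four_le univ c
  rw [hc] at h2 h4
  calc (1 / 4 - θ ^ 2) * 2 ^ Fintype.card ι
      ≤ ∑ ω, (rademacherSum univ c ω ^ 2 - rademacherSum univ c ω ^ 4 / 4 - θ ^ 2) := by
        simp only [sum_sub_distrib, ← sum_div, sum_const, card_univ, Fintype.card_fun,
          Fintype.card_bool, nsmul_eq_mul, h2]
        push_cast
        linarith
    _ ≤ ∑ ω, if θ ≤ |rademacherSum univ c ω| then (1 : ℝ) else 0 := sum_le_sum fun ω _ => hpt _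
    _ = #{ω | θ ≤ |rademacherSum univ c ω|} := by simp [sum_boole]

end Rademacher

-- Chernoff lower tail for the number of successes in `#κ` independent uniform trials.
theorem card_card_filter_le_le {κ β : Type*} [Fintype κ] [DecidableEq κ] [Fintype β]
    (P : β → Prop) [DecidablePred P] {p : ℝ} (hp : p * Fintype.card β ≤ #{r | P r}) (k : ℝ) :
    (#{ω : κ → β | (#{i | P (ω i)} : ℝ) ≤ k} : ℝ)
      ≤ exp (k - p * Fintype.card κ / 2) * Fintype.card β ^ Fintype.card κ := by
  set g : β → ℝ := fun r => exp (-if P r then 1 else 0)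
  have hexp : exp (-1) ≤ 1 / 2 := by
    rw [exp_neg, one_div]
    exact inv_anti₀ two_pos (by linarith [add_one_le_exp 1])
  have hrow : ∑ r, g r ≤ Fintype.card β * exp (-(p / 2)) := by
    have hg (r : β) : g r = 1 - (1 - exp (-1)) * if P r then 1 else 0 := by
      split_ifs with h <;> simp [g, h]
    have hP : (#{r | P r} : ℝ) = ∑ r, if P r then (1 : ℝ) else 0 := by simp [sum_boole]
    simp only [hg, sum_sub_distrib, ← mul_sum, ← hP, sum_const, card_univ, nsmul_eq_mul, mul_one]
    nlinarith [add_one_le_exp (-(p / 2)), Nat.cast_nonneg (α := ℝ) (Fintype.card β)]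
  have hcount (ω : κ → β) : exp (-(#{i | P (ω i)} : ℝ)) = ∏ i, g (ω i) := by
    simp [g, ← exp_sum, sum_boole]
  calc (#{ω : κ → β | (#{i | P (ω i)} : ℝ) ≤ k} : ℝ)
      = #{ω : κ → β | -k ≤ -(#{i | P (ω i)} : ℝ)} := by simp
    _ ≤ exp k * ∑ ω : κ → β, ∏ i, g (ω i) := by
        simpa [hcount] using card_filter_le_exp_neg_mul_sum_exp univ
          (fun ω : κ → β => -(#{i | P (ω i)} : ℝ)) (-k)
    _ ≤ exp k * (Fintype.card β * exp (-(p / 2))) ^ Fintype.card κ := by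
        rw [← Fintype.prod_sum fun (_ : κ) r => g r, prod_const, card_univ]
        gcongr
    _ = exp (k - p * Fintype.card κ / 2) * Fintype.card β ^ Fintype.card κ := by
        rw [mul_pow, ← exp_nat_mul, mul_left_comm, ← exp_add]
        ring_nf

section Nets

variable {E : Type*} [NormedAddCommGroup E] [NormedSpace ℝ E] [FiniteDimensional ℝ E]
  [MeasurableSpace E] [BorelSpace E]

theorem card_le_of_pairwise_le_dist {ρ : ℝ} (hρ : 0 < ρ) (F : Finset E) (hF : ∀ y ∈ F, ‖y‖ ≤ 1)
    (hsep : (F : Set E).Pairwise fun a b => ρ ≤ dist a b) :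
    (#F : ℝ) ≤ (1 + 2 / ρ) ^ Module.finrank ℝ E := by
  set μ : Measure E := Measure.addHaar
  set d := Module.finrank ℝ E
  have hdisj : (F : Set E).PairwiseDisjoint fun y => ball y (ρ / 2) :=
    fun a ha b hb hab => ball_disjoint_ball (by linarith [hsep ha hb hab])
  have hsub : (⋃ y ∈ F, ball y (ρ / 2)) ⊆ ball (0 : E) (1 + ρ / 2) := by
    refine Set.iUnion₂_subset fun y hy z hz => ?_
    rw [mem_ball, dist_zero_right] at *
    linarith [norm_le_norm_add_norm_sub' z y, hF y hy, dist_eq_norm z y]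
  have hvol : (#F : ENNReal) * (ENNReal.ofReal ((ρ / 2) ^ d) * μ (ball 0 1))
      ≤ ENNReal.ofReal ((1 + ρ / 2) ^ d) * μ (ball 0 1) := by
    have := measure_mono (μ := μ) hsub
    rw [measure_biUnion_finset hdisj fun y _ => measurableSet_ball] at this
    simpa [Measure.addHaar_ball_of_pos μ _ (half_pos hρ),
      Measure.addHaar_ball_of_pos μ _ (by positivity : 0 < 1 + ρ / 2)] using this
  rw [← mul_assoc, ENNReal.mul_le_mul_iff_left (measure_ball_pos μ 0 one_pos).ne'
    measure_ball_lt_top.ne, ← ENNReal.ofReal_natCast, ← ENNReal.ofReal_mul (by positivity),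
    ENNReal.ofReal_le_ofReal_iff (by positivity)] at hvol
  rw [show 1 + 2 / ρ = (1 + ρ / 2) / (ρ / 2) by field_simp; ring, div_pow,
    le_div_iff₀ (by positivity)]
  exact hvol

theorem exists_finset_net {K : Set E} (hK : K ⊆ closedBall 0 1) {ρ : NNReal} (hρ : 0 < ρ) :
    ∃ F : Finset E, ↑F ⊆ K ∧ (∀ x ∈ K, ∃ y ∈ F, ‖x - y‖ ≤ ρ) ∧
      (#F : ℝ) ≤ (1 + 2 / ρ) ^ Module.finrank ℝ E := by
  have hcard (F : Finset E) (hFK : ↑F ⊆ K) (hF : IsSeparated ρ (F : Set E)) :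
      (#F : ℝ) ≤ (1 + 2 / ρ) ^ Module.finrank ℝ E := by
    refine card_le_of_pairwise_le_dist hρ F (fun y hy => by simpa using hK (hFK hy))
      fun a ha b hb hab => ?_
    have : (ρ : ENNReal) < edist a b := hF ha hb hab
    rw [edist_nndist, ENNReal.coe_lt_coe, ← NNReal.coe_lt_coe, coe_nndist] at this
    exact this.le
  have hpack : packingNumber ρ K ≠ ⊤ := by
    refine ne_top_of_le_ne_top (ENat.natCast_ne_top ⌊(1 + 2 / (ρ : ℝ)) ^ Module.finrank ℝ E⌋₊) ?_
    refine iSup₂_le fun C hCK => iSup_le fun hC => ?_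
    by_contra! hlt
    obtain ⟨D, hDC, hD⟩ := Set.exists_subset_encard_eq (Order.add_one_le_of_lt hlt)
    have hDfin : D.Finite := Set.finite_of_encard_eq_coe hD
    have := hcard hDfin.toFinset (by simpa using hDC.trans hCK) (by simpa using hC.subset hDC)
    rw [← Set.ncard_eq_toFinset_card D hDfin, Set.ncard_def, hD, ← Nat.cast_add_one,
      ENat.toNat_natCast, Nat.cast_add_one] at this
    linarith [Nat.lt_floor_add_one ((1 + 2 / (ρ : ℝ)) ^ Module.finrank ℝ E)]
  set C := maximalSeparatedSet ρ K
  have hCfin : C.Finite := Set.encard_ne_top_iff.mp (encard_maximalSeparatedSet hpack ▸ hpack)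
  refine ⟨hCfin.toFinset, by simpa using maximalSeparatedSet_subset, fun x hx => ?_,
    hcard _ (by simpa using maximalSeparatedSet_subset) (by simpa using
      isSeparated_maximalSeparatedSet)⟩
  obtain ⟨y, hy, hxy⟩ := isCover_maximalSeparatedSet hpack hx
  change edist x y ≤ ρ at hxy
  refine ⟨y, by simpa using hy, ?_⟩
  rwa [edist_nndist, ENNReal.coe_le_coe, ← NNReal.coe_le_coe, coe_nndist, dist_eq_norm] at hxy

end Nets

theorem exists_finset_sphere_net (ι : Type*) [Fintype ι] {ρ : NNReal} (hρ : 0 < ρ) :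
    ∃ N : Finset (EuclideanSpace ℝ ι), (∀ y ∈ N, ‖y‖ = 1) ∧
      (∀ x, ‖x‖ = 1 → ∃ y ∈ N, ‖x - y‖ ≤ ρ) ∧ (#N : ℝ) ≤ exp (Fintype.card ι * (2 / ρ)) := by
  obtain ⟨N, hNK, hN, hNcard⟩ :=
    exists_finset_net (E := EuclideanSpace ℝ ι) sphere_subset_closedBall hρ
  rw [finrank_euclideanSpace] at hNcard
  exact ⟨N, fun y hy => by simpa using hNK hy, fun x hx => hN x (by simpa using hx),
    hNcard.trans (one_add_pow_le_exp_mul (by positivity) _)⟩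

theorem opNorm_le_of_net {E F : Type*} [NormedAddCommGroup E] [NormedSpace ℝ E]
    [SeminormedAddCommGroup F] [NormedSpace ℝ F] (T : E →L[ℝ] F) {N : Set E} {ε a : ℝ}
    (hε₀ : 0 ≤ ε) (hε : ε < 1) (ha : 0 ≤ a) (hN : ∀ x, ‖x‖ = 1 → ∃ y ∈ N, ‖x - y‖ ≤ ε)
    (hT : ∀ y ∈ N, ‖T y‖ ≤ a) : ‖T‖ ≤ a / (1 - ε) := by
  have : ‖T‖ ≤ a + ‖T‖ * ε := by
    refine T.opNorm_le_of_unit_norm (by positivity) fun x hx => ?_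
    obtain ⟨y, hy, hxy⟩ := hN x hx
    calc ‖T x‖ = ‖T y + T (x - y)‖ := by rw [← map_add, add_sub_cancel]
      _ ≤ a + ‖T‖ * ε := norm_add_le_of_le (hT y hy)
          ((T.le_opNorm _).trans (mul_le_mul_of_nonneg_left hxy T.opNorm_nonneg))
  rw [le_div_iff₀ (by linarith)]
  linarith

theorem opNorm_le_of_abs_inner_le_on_nets {E F : Type*} [NormedAddCommGroup E]
    [InnerProductSpace ℝ E] [NormedAddCommGroup F] [InnerProductSpace ℝ F] (T : E →L[ℝ] F)
    {N₁ : Set E} {N₂ : Set F} {ε a : ℝ} (hε₀ : 0 ≤ ε) (hε : ε < 1) (ha : 0 ≤ a)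
    (hN₁ : ∀ x, ‖x‖ = 1 → ∃ y ∈ N₁, ‖x - y‖ ≤ ε) (hN₂ : ∀ x, ‖x‖ = 1 → ∃ y ∈ N₂, ‖x - y‖ ≤ ε)
    (hT : ∀ y ∈ N₁, ∀ z ∈ N₂, |inner ℝ z (T y)| ≤ a) : ‖T‖ ≤ a / (1 - ε) / (1 - ε) := by
  refine opNorm_le_of_net T hε₀ hε (div_nonneg ha (by linarith)) hN₁ fun y hy => ?_
  rw [← innerSL_apply_norm ℝ (T y)]
  refine opNorm_le_of_net _ hε₀ hε ha hN₂ fun z hz => ?_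
  rw [innerSL_apply_apply, real_inner_comm, Real.norm_eq_abs]
  exact hT y hy z hz

section Coordinates

variable {κ : Type*} [Fintype κ]

theorem sum_sq_eq_norm_sq (x : EuclideanSpace ℝ κ) : ∑ j, x j ^ 2 = ‖x‖ ^ 2 := by
  simp [EuclideanSpace.norm_sq_eq]

theorem sq_mul_card_le_abs_le_norm_sq (v : EuclideanSpace ℝ κ) {a : ℝ} (ha : 0 ≤ a) :
    a ^ 2 * #{i | a ≤ |v i|} ≤ ‖v‖ ^ 2 := by
  rw [← sum_sq_eq_norm_sq]
  calc a ^ 2 * #{i | a ≤ |v i|} = ∑ i ∈ univ.filter (fun i => a ≤ |v i|), a ^ 2 := by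
        simp [mul_comm]
    _ ≤ ∑ i ∈ univ.filter (fun i => a ≤ |v i|), v i ^ 2 := by
        refine sum_le_sum fun i hi => ?_
        rw [← sq_abs (v i)]
        exact pow_le_pow_left₀ ha (mem_filter.1 hi).2 2
    _ ≤ ∑ i, v i ^ 2 :=
        sum_le_sum_of_subset_of_nonneg (filter_subset _ _) fun _ _ _ => sq_nonneg _

theorem card_le_abs_le_card_le_abs_add (v w : EuclideanSpace ℝ κ) {a b : ℝ} (hb : 0 < b) :
    (#{i | a ≤ |v i|} : ℝ) ≤ #{i | a - b ≤ |w i|} + ‖v - w‖ ^ 2 / b ^ 2 := by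
  classical
  have hsub : univ.filter (fun i => a ≤ |v i|) ⊆
      univ.filter (fun i => a - b ≤ |w i|) ∪ univ.filter (fun i => b ≤ |(v - w) i|) := by
    intro i hi
    have h := (mem_filter.1 hi).2
    rw [mem_union, mem_filter, mem_filter, PiLp.sub_apply]
    by_cases hw : a - b ≤ |w i|
    · exact .inl ⟨mem_univ _, hw⟩
    · exact .inr ⟨mem_univ _, by linarith [abs_sub_abs_le_abs_sub (v i) (w i)]⟩
  have hdiff := sq_mul_card_le_abs_le_norm_sq (v - w) hb.le
  calc (#{i | a ≤ |v i|} : ℝ)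
      ≤ #{i | a - b ≤ |w i|} + #{i | b ≤ |(v - w) i|} := by
        exact_mod_cast (card_le_card hsub).trans (card_union_le _ _)
    _ ≤ #{i | a - b ≤ |w i|} + ‖v - w‖ ^ 2 / b ^ 2 := by
        gcongr
        rw [le_div_iff₀ (by positivity)]
        linarith

variable {E : Type*} [NormedAddCommGroup E] [NormedSpace ℝ E]

theorem lt_card_le_abs_apply_of_net (T : E →L[ℝ] EuclideanSpace ℝ κ) {N : Set E}
    {ρ C a b B : ℝ} (hb : 0 < b) (hN : ∀ x, ‖x‖ = 1 → ∃ y ∈ N, ‖x - y‖ ≤ ρ) (hT : ‖T‖ ≤ C)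
    (hgood : ∀ y ∈ N, B < #{i | a ≤ |T y i|}) {x : E} (hx : ‖x‖ = 1) :
    B - (C * ρ / b) ^ 2 < #{i | a - b ≤ |T x i|} := by
  obtain ⟨y, hy, hxy⟩ := hN x hx
  have hTyx : ‖T y - T x‖ ≤ C * ρ := by
    rw [← map_sub, norm_sub_rev] at *
    exact (T.le_opNorm _).trans (mul_le_mul hT hxy (norm_nonneg _) ((norm_nonneg _).trans hT))
  have hsq : ‖T y - T x‖ ^ 2 / b ^ 2 ≤ (C * ρ / b) ^ 2 := by
    rw [div_pow]
    gcongr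
  linarith [hgood y hy, card_le_abs_le_card_le_abs_add (T y) (T x) (a := a) hb]

theorem le_card_mul_norm_le_abs_apply (T : E →L[ℝ] EuclideanSpace ℝ κ) {c B : ℝ}
    (hB : B ≤ Fintype.card κ) (h : ∀ x, ‖x‖ = 1 → B ≤ #{i | c ≤ |T x i|}) (x : E) :
    B ≤ #{i | c * ‖x‖ ≤ |T x i|} := by
  rcases eq_or_ne x 0 with rfl | hx
  · simpa using hB
  have hx' : 0 < ‖x‖ := norm_pos_iff.2 hx
  have hTx (i : κ) : T x i = ‖x‖ * T (‖x‖⁻¹ • x) i := by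
    rw [map_smul, PiLp.smul_apply, smul_eq_mul, ← mul_assoc, mul_inv_cancel₀ hx'.ne', one_mul]
  convert h (‖x‖⁻¹ • x) (by rw [norm_smul, norm_inv, norm_norm, inv_mul_cancel₀ hx'.ne'])
    using 4 with i
  rw [hTx, abs_mul, abs_of_pos hx', mul_comm c, mul_le_mul_iff_right₀ hx']

end Coordinates

section SignMatrix

variable {ι κ : Type*} [Fintype ι] [Fintype κ]

noncomputable def signMatrix (ω : κ → ι → Bool) : Matrix κ ι ℝ :=
  Matrix.of fun i j => rademacher (ω i j)

variable [DecidableEq ι]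

noncomputable def signOperator (ω : κ → ι → Bool) : EuclideanSpace ℝ ι →L[ℝ] EuclideanSpace ℝ κ :=
  LinearMap.toContinuousLinearMap (Matrix.toEuclideanLin (signMatrix ω))

theorem signOperator_apply (ω : κ → ι → Bool) (x : EuclideanSpace ℝ ι) (i : κ) :
    signOperator ω x i = rademacherSum univ x (ω i) := by
  simp [signOperator, signMatrix, rademacherSum, Matrix.mulVec, dotProduct, mul_comm]

theorem inner_signOperator (ω : κ → ι → Bool) (y : EuclideanSpace ℝ ι)
    (z : EuclideanSpace ℝ κ) :
    inner ℝ z (signOperator ω y)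
      = rademacherSum univ (fun p : κ × ι => z p.1 * y p.2) (Function.uncurry ω) := by
  simp [PiLp.inner_apply, signOperator_apply, rademacherSum, Fintype.sum_prod_type, mul_sum,
    mul_assoc, mul_comm]

variable [DecidableEq κ]

theorem card_le_abs_inner_signOperator_le {y : EuclideanSpace ℝ ι} {z : EuclideanSpace ℝ κ}
    (hy : ‖y‖ ≤ 1) (hz : ‖z‖ ≤ 1) {a : ℝ} (ha : 0 ≤ a) :
    (#{ω : κ → ι → Bool | a ≤ |inner ℝ z (signOperator ω y)|} : ℝ)
      ≤ 2 * exp (-(a ^ 2 / 2)) * 2 ^ (Fintype.card κ * Fintype.card ι) := by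
  have hc : ∑ p : κ × ι, (z p.1 * y p.2) ^ 2 ≤ 1 := by
    rw [show ∑ p : κ × ι, (z p.1 * y p.2) ^ 2 = (∑ i, z i ^ 2) * ∑ j, y j ^ 2 by
      simp [Fintype.sum_prod_type, sum_mul_sum, mul_pow], sum_sq_eq_norm_sq, sum_sq_eq_norm_sq]
    exact mul_le_one₀ (pow_le_one₀ (norm_nonneg _) hz) (sq_nonneg _)
      (pow_le_one₀ (norm_nonneg _) hy)
  rw [card_equiv (Equiv.curry κ ι Bool).symm
    (t := {ω | a ≤ |rademacherSum univ (fun p : κ × ι => z p.1 * y p.2) ω|})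
    fun ω => by simp [inner_signOperator]]
  simpa [Fintype.card_prod] using card_le_abs_rademacherSum_le hc ha

theorem card_card_filter_le_abs_signOperator_le {y : EuclideanSpace ℝ ι} (hy : ‖y‖ = 1)
    (θ k : ℝ) :
    (#{ω : κ → ι → Bool | (#{i | θ ≤ |signOperator ω y i|} : ℝ) ≤ k} : ℝ)
      ≤ exp (k - (1 / 4 - θ ^ 2) * Fintype.card κ / 2) * 2 ^ (Fintype.card ι * Fintype.card κ) := by
  have hp := le_card_le_abs_rademacherSum (c := y) (by rw [sum_sq_eq_norm_sq, hy, one_pow]) θ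
  simpa [signOperator_apply, pow_mul] using card_card_filter_le_le (κ := κ)
    (fun r => θ ≤ |rademacherSum univ y r|) (by simpa using hp) k

theorem card_lt_opNorm_signOperator_le [Nonempty κ] (hnm : Fintype.card ι ≤ Fintype.card κ) :
    (#{ω : κ → ι → Bool | 32 / 3 * √(Fintype.card κ) < ‖signOperator ω‖} : ℝ)
      ≤ exp (-1) * 2 ^ (Fintype.card κ * Fintype.card ι) := by
  have hm : (1 : ℝ) ≤ Fintype.card κ := by exact_mod_cast Fintype.card_pos
  have hnm' : (Fintype.card ι : ℝ) ≤ Fintype.card κ := by exact_mod_cast hnm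
  obtain ⟨N₁, hN₁norm, hN₁, hN₁card⟩ := exists_finset_sphere_net ι (ρ := 1 / 4) (by norm_num)
  obtain ⟨N₂, hN₂norm, hN₂, hN₂card⟩ := exists_finset_sphere_net κ (ρ := 1 / 4) (by norm_num)
  norm_num [mul_comm _ (8 : ℝ)] at hN₁ hN₂ hN₁card hN₂card
  have hsub : univ.filter (fun ω : κ → ι → Bool => 32 / 3 * √(Fintype.card κ) < ‖signOperator ω‖)
      ⊆ (N₁ ×ˢ N₂).biUnion fun p =>
        {ω | 6 * √(Fintype.card κ) ≤ |inner ℝ p.2 (signOperator ω p.1)|} := by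
    intro ω hω
    simp only [mem_filter, mem_univ, true_and] at hω
    contrapose! hω
    simp only [mem_biUnion, mem_product, mem_filter, mem_univ, true_and, not_exists, not_and,
      not_le, Prod.forall] at hω
    have := opNorm_le_of_abs_inner_le_on_nets (signOperator ω) (by norm_num) (by norm_num)
      (by positivity) hN₁ hN₂ fun y hy z hz => (hω y z ⟨hy, hz⟩).le
    norm_num at this
    linarith
  refine (Nat.cast_le.2 (card_le_card hsub)).trans <| (cast_card_biUnion_le fun p hp =>
    card_le_abs_inner_signOperator_le (a := 6 * √(Fintype.card κ))
      (hN₁norm _ (mem_product.1 hp).1).le (hN₂norm _ (mem_product.1 hp).2).le (by positivity)).trans ?_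
  rw [card_product, Nat.cast_mul, mul_pow, sq_sqrt (Nat.cast_nonneg _)]
  have hexp1 : 2 ≤ exp 1 := by linarith [add_one_le_exp 1]
  calc _ ≤ exp _ * exp _ * (exp 1 * exp (-(6 ^ 2 * Fintype.card κ / 2))
        * 2 ^ (Fintype.card κ * Fintype.card ι)) := by gcongr
    _ = exp (8 * Fintype.card ι + 8 * Fintype.card κ + 1 - 18 * Fintype.card κ)
        * 2 ^ (Fintype.card κ * Fintype.card ι) := by
        simp only [← mul_assoc, ← exp_add]; ring_nf
    _ ≤ _ := by gcongr; linarith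

theorem card_exists_card_le_abs_signOperator_le_le [Nonempty ι]
    (hm : 2 ^ 17 * Fintype.card ι ≤ Fintype.card κ) {N : Finset (EuclideanSpace ℝ ι)}
    (hN : ∀ y ∈ N, ‖y‖ = 1) (hNcard : (#N : ℝ) ≤ exp (2048 * Fintype.card ι)) :
    (#{ω : κ → ι → Bool |
        ∃ y ∈ N, (#{i | 1 / 8 ≤ |signOperator ω y i|} : ℝ) ≤ Fintype.card κ / 16} : ℝ)
      ≤ exp (-1) * 2 ^ (Fintype.card κ * Fintype.card ι) := by
  have hn : (1 : ℝ) ≤ Fintype.card ι := by exact_mod_cast Fintype.card_pos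
  have hmn : (2 ^ 17 : ℝ) * Fintype.card ι ≤ Fintype.card κ := by exact_mod_cast hm
  have hsub : univ.filter (fun ω : κ → ι → Bool =>
        ∃ y ∈ N, (#{i | 1 / 8 ≤ |signOperator ω y i|} : ℝ) ≤ Fintype.card κ / 16)
      = N.biUnion fun y => {ω : κ → ι → Bool |
        (#{i | 1 / 8 ≤ |signOperator ω y i|} : ℝ) ≤ Fintype.card κ / 16} := by
    ext ω
    simp
  rw [hsub]
  refine (cast_card_biUnion_le fun y hy =>
    card_card_filter_le_abs_signOperator_le (κ := κ) (hN y hy) (1 / 8)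
      (Fintype.card κ / 16)).trans ?_
  calc _ ≤ exp _ * (exp (Fintype.card κ / 16 - (1 / 4 - (1 / 8) ^ 2) * Fintype.card κ / 2)
        * 2 ^ (Fintype.card ι * Fintype.card κ)) := by gcongr
    _ = exp (2048 * Fintype.card ι - 7 * Fintype.card κ / 128)
        * 2 ^ (Fintype.card κ * Fintype.card ι) := by
        rw [mul_comm (Fintype.card ι), ← mul_assoc, ← exp_add]; ring_nf
    _ ≤ _ := by gcongr; nlinarith

theorem exists_signs_le_card_le_abs_signOperator [Nonempty ι]
    (hm : 2 ^ 17 * Fintype.card ι ≤ Fintype.card κ) :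
    ∃ ω : κ → ι → Bool, ∀ x, (Fintype.card κ : ℝ) / 32
      ≤ #{i | 1 / 16 * ‖x‖ ≤ |signOperator ω x i|} := by
  have : Nonempty κ := Fintype.card_pos_iff.1 (by linarith [Fintype.card_pos (α := ι)])
  obtain ⟨N, hNnorm, hN, hNcard⟩ := exists_finset_sphere_net ι (ρ := 1 / 1024) (by norm_num)
  norm_num [mul_comm _ (2048 : ℝ)] at hN hNcard
  have hopNorm := card_lt_opNorm_signOperator_le (ι := ι) (κ := κ) (by omega)
  have hnet := card_exists_card_le_abs_signOperator_le_le (κ := κ) hm hNnorm hNcard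
  obtain ⟨ω, hω₁, hω₂⟩ := exists_notMem_notMem_of_card_le_of_card_le hopNorm hnet <| by
    rw [Fintype.card_fun, Fintype.card_fun, Fintype.card_bool, ← pow_mul, mul_comm (Fintype.card ι)]
    push_cast
    rw [← mul_assoc]
    refine mul_lt_of_lt_one_left (by positivity) ?_
    rw [exp_neg, ← div_eq_mul_inv, div_lt_one (exp_pos 1)]
    linarith [add_one_lt_exp one_ne_zero]
  simp only [mem_filter, mem_univ, true_and, not_lt, not_exists, not_and, not_le] at hω₁ hω₂
  refine ⟨ω, le_card_mul_norm_le_abs_apply _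
    (by linarith [Nat.cast_nonneg (α := ℝ) (Fintype.card κ)]) fun x hx => ?_⟩
  have := lt_card_le_abs_apply_of_net (signOperator ω) (b := 1 / 16) (by norm_num) hN hω₁ hω₂ hx
  rw [div_pow, mul_pow, mul_pow, sq_sqrt (Nat.cast_nonneg _)] at this
  norm_num at this
  linarith

end SignMatrix

section Subsets

variable {ι κ : Type*} [Fintype ι] [Fintype κ]

theorem rademacherSum_eq_sum_filter_sub_sum_filter (x : ι → ℝ) (r : ι → Bool) :
    rademacherSum univ x r = ∑ j ∈ univ.filter (fun j => r j = true), x j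
      - ∑ j ∈ univ.filter (fun j => r j = false), x j := by
  simp [rademacherSum, rademacher, mul_ite, sum_ite, sub_eq_add_neg]

theorem card_le_abs_rademacherSum_le_card_le_abs_sum_filter {U : Type*} [Fintype U]
    (e : U ≃ κ × Bool) (ω : κ → ι → Bool) (x : ι → ℝ) (a : ℝ) :
    #{i | a ≤ |rademacherSum univ x (ω i)|}
      ≤ #{u | a / 2 ≤ |∑ j ∈ univ.filter (fun j => ω (e u).1 j = (e u).2), x j|} := by
  refine card_le_card_of_injOn
    (fun i => e.symm (i, decide (a / 2 ≤ |∑ j ∈ univ.filter (fun j => ω i j = true), x j|)))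
    (fun i hi => ?_) fun i _ i' _ h => congrArg Prod.fst (e.symm.injective h)
  have hi := (mem_filter.1 hi).2
  rw [rademacherSum_eq_sum_filter_sub_sum_filter] at hi
  simp only [coe_filter, mem_univ, true_and, Set.mem_ofPred_eq, Equiv.apply_symm_apply]
  by_cases h : a / 2 ≤ |∑ j ∈ univ.filter (fun j => ω i j = true), x j|
  · simp [h]
  · simp only [h, decide_false]
    linarith [hi.trans (abs_sub _ _), not_le.1 h]

end Subsets

end OneBitIsometry

open OneBitIsometry

/-- One-bit isometry: there exist absolute constants `α > 0`, `δ₀ ∈ (0,1)`, `c₀ ∈ ℕ` and, for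
each `s`, fixed subsets `S_u ⊆ [2^s]` indexed by `u ∈ U` with `|U| = 2^{s+c₀}`, such that for
all `p, q ∈ [0,1]^{2^s}`, a uniformly random `u` satisfies
`|p(S_u) - q(S_u)| ≥ α·‖p - q‖₂` with probability at least `1 - δ₀`. -/
theorem one_bit_isometry :
    ∃ (α δ₀ : ℝ) (c₀ : ℕ), 0 < α ∧ δ₀ ∈ Set.Ioo (0 : ℝ) 1 ∧
      ∀ s : ℕ, ∃ S : Fin (2 ^ (s + c₀)) → Finset (Fin (2 ^ s)),
        ∀ p q : Fin (2 ^ s) → ℝ,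
          (∀ i, p i ∈ Set.Icc (0 : ℝ) 1) → (∀ i, q i ∈ Set.Icc (0 : ℝ) 1) →
          (1 - δ₀) * (2 ^ (s + c₀) : ℝ)
            ≤ ((Finset.univ.filter fun u : Fin (2 ^ (s + c₀)) =>
                α * Real.sqrt (∑ i, (p i - q i) ^ 2)
                  ≤ |(∑ i ∈ S u, p i) - ∑ i ∈ S u, q i|).card : ℝ) := by
  refine ⟨1 / 32, 63 / 64, 18, by norm_num, ⟨by norm_num, by norm_num⟩, fun s => ?_⟩
  obtain ⟨ω, hω⟩ := exists_signs_le_card_le_abs_signOperator (ι := Fin (2 ^ s))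
    (κ := Fin (2 ^ (s + 17))) (by rw [Fintype.card_fin, Fintype.card_fin, pow_add, mul_comm])
  let e : Fin (2 ^ (s + 18)) ≃ Fin (2 ^ (s + 17)) × Bool :=
    (Fintype.equivFinOfCardEq (by rw [Fintype.card_prod, Fintype.card_fin, Fintype.card_bool,
      ← pow_succ])).symm
  refine ⟨fun u => univ.filter fun j => ω (e u).1 j = (e u).2, fun p q _ _ => ?_⟩
  let x : EuclideanSpace ℝ (Fin (2 ^ s)) := WithLp.toLp 2 (p - q)
  have hx : ‖x‖ = √(∑ i, (p i - q i) ^ 2) := by simp [x, EuclideanSpace.norm_eq]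
  calc (1 - 63 / 64) * (2 ^ (s + 18) : ℝ) = (Fintype.card (Fin (2 ^ (s + 17))) : ℝ) / 32 := by
        simp only [Fintype.card_fin]; push_cast; ring
    _ ≤ #{i | 1 / 16 * ‖x‖ ≤ |signOperator ω x i|} := hω x
    _ ≤ #{u | 1 / 16 * ‖x‖ / 2 ≤ |∑ j ∈ univ.filter (fun j => ω (e u).1 j = (e u).2), x j|} := by
        simpa only [signOperator_apply] using mod_cast
          card_le_abs_rademacherSum_le_card_le_abs_sum_filter e ω x (1 / 16 * ‖x‖)
    _ = _ := by
        simp only [hx, ← sum_sub_distrib, show ∀ r : ℝ, 1 / 16 * r / 2 = 1 / 32 * r by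
          intro r; ring]
        rfl
end

section
/- Parseval-based ℓ₂ identity for the Hadamard LDP scheme: let K be a power of 2, H_K the K×K Hadamard matrix, and C_j ⊆ [K] the set of positions of +1 in the j-th column of H_K. For p, q ∈ Δ_K define p_{C_j} = ((e^ρ − 1)/(e^ρ + 1))·p(C_j) + 1/(e^ρ + 1) and similarly q_{C_j}. Then ∑_{j=1}^K (p_{C_j} − q_{C_j})² = (K(e^ρ − 1)²/(4(e^ρ + 1)²))·‖p − q‖₂². -/
open Finset Matrix Real
open scoped Classical

/-- Parseval-based ℓ₂ identity for the Hadamard LDP scheme: with `H` a `K×K` (Sylvester)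
Hadamard matrix (`±1` entries, `HᵀH = K·I`), `C_j` the positions of `+1` in column `j`, and
`p_{C_j} = ((e^ρ-1)/(e^ρ+1))·p(C_j) + 1/(e^ρ+1)`, one has
`∑_j (p_{C_j} - q_{C_j})² = K(e^ρ-1)²/(4(e^ρ+1)²)·‖p-q‖₂²`. -/
theorem hadamard_parseval_identity (K : ℕ) (hK : ∃ t : ℕ, K = 2 ^ t)
    (H : Matrix (Fin K) (Fin K) ℝ)
    (hent : ∀ i j, H i j = 1 ∨ H i j = -1)
    (horth : Hᵀ * H = (K : ℝ) • (1 : Matrix (Fin K) (Fin K) ℝ))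
    (ρ : ℝ) (hρ : 0 < ρ)
    (p q : Fin K → ℝ)
    (hp0 : ∀ x, 0 ≤ p x) (hp1 : ∑ x, p x = 1)
    (hq0 : ∀ x, 0 ≤ q x) (hq1 : ∑ x, q x = 1) :
    ∑ j, (((exp ρ - 1) / (exp ρ + 1)) * (∑ x ∈ Finset.univ.filter fun x => H x j = 1, p x)
            + 1 / (exp ρ + 1)
          - (((exp ρ - 1) / (exp ρ + 1)) * (∑ x ∈ Finset.univ.filter fun x => H x j = 1, q x)
            + 1 / (exp ρ + 1))) ^ 2
      = (K : ℝ) * (exp ρ - 1) ^ 2 / (4 * (exp ρ + 1) ^ 2) * ∑ x, (p x - q x) ^ 2 := by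
  have hK0 : (K : ℝ) ≠ 0 := by
    obtain ⟨t, rfl⟩ := hK
    positivity
  set d : Fin K → ℝ := fun x => p x - q x with hd
  have hsum0 : ∑ x, d x = 0 := by
    simp [hd, Finset.sum_sub_distrib, hp1, hq1]
  -- H * Hᵀ = K • 1
  have h1 : ((K : ℝ)⁻¹ • Hᵀ) * H = 1 := by
    rw [Matrix.smul_mul, horth, smul_smul, inv_mul_cancel₀ hK0, one_smul]
  have h2 : H * ((K : ℝ)⁻¹ • Hᵀ) = 1 := mul_eq_one_comm.mp h1
  have hHHt : H * Hᵀ = (K : ℝ) • (1 : Matrix (Fin K) (Fin K) ℝ) := by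
    rw [Matrix.mul_smul] at h2
    calc H * Hᵀ = (K : ℝ) • ((K : ℝ)⁻¹ • (H * Hᵀ)) := by
          rw [smul_smul, mul_inv_cancel₀ hK0, one_smul]
      _ = (K : ℝ) • (1 : Matrix (Fin K) (Fin K) ℝ) := by rw [h2]
  have hdot : ∀ x y, ∑ j, H x j * H y j = if x = y then (K : ℝ) else 0 := by
    intro x y
    have := congrFun (congrFun hHHt x) y
    simpa [Matrix.mul_apply, Matrix.one_apply, mul_ite, mul_one, mul_zero] using this
  -- sum over filter equals half the Hadamard coefficient
  have key : ∀ j, ∑ x ∈ Finset.univ.filter (fun x => H x j = 1), d x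
      = (1 / 2) * ∑ x, H x j * d x := by
    intro j
    have h1' : ∑ x ∈ Finset.univ.filter (fun x => H x j = 1), d x
        = ∑ x, (if H x j = 1 then d x else 0) := Finset.sum_filter _ _
    have h2' : ∀ x, (if H x j = 1 then d x else 0)
        = (1 / 2) * (H x j * d x) + (1 / 2) * d x := by
      intro x
      rcases hent x j with h | h
      · simp [h]; ring
      · rw [if_neg (by rw [h]; norm_num), h]; ring
    rw [h1', Finset.sum_congr rfl fun x _ => h2' x, Finset.sum_add_distrib,
      ← Finset.mul_sum, ← Finset.mul_sum, hsum0, mul_zero, add_zero]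
  have hsq : ∑ j, (∑ x, H x j * d x) ^ 2 = (K : ℝ) * ∑ x, d x ^ 2 := by
    have expand : ∀ j : Fin K,
        (∑ x, H x j * d x) ^ 2 = ∑ x, ∑ y, (d x * d y) * (H x j * H y j) := by
      intro j
      rw [sq, Finset.sum_mul_sum]
      exact Finset.sum_congr rfl fun x _ => Finset.sum_congr rfl fun y _ => by ring
    calc ∑ j, (∑ x, H x j * d x) ^ 2
        = ∑ j, ∑ x, ∑ y, (d x * d y) * (H x j * H y j) :=
          Finset.sum_congr rfl fun j _ => expand j
      _ = ∑ x, ∑ y, (d x * d y) * ∑ j, (H x j * H y j) := by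
          rw [Finset.sum_comm]
          refine Finset.sum_congr rfl fun x _ => ?_
          rw [Finset.sum_comm]
          exact Finset.sum_congr rfl fun y _ => (Finset.mul_sum _ _ _).symm
      _ = ∑ x, ∑ y, (d x * d y) * (if x = y then (K : ℝ) else 0) := by
          exact Finset.sum_congr rfl fun x _ => Finset.sum_congr rfl fun y _ => by
            rw [hdot]
      _ = (K : ℝ) * ∑ x, d x ^ 2 := by
          simp only [mul_ite, mul_zero, Finset.sum_ite_eq, Finset.mem_univ, if_true, Finset.mul_sum]
          exact Finset.sum_congr rfl fun x _ => by ring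
  have hE : (0 : ℝ) < exp ρ + 1 := by positivity
  have hterm : ∀ j, (((exp ρ - 1) / (exp ρ + 1)) * (∑ x ∈ Finset.univ.filter fun x => H x j = 1, p x)
            + 1 / (exp ρ + 1)
          - (((exp ρ - 1) / (exp ρ + 1)) * (∑ x ∈ Finset.univ.filter fun x => H x j = 1, q x)
            + 1 / (exp ρ + 1))) ^ 2
      = ((exp ρ - 1) / (exp ρ + 1)) ^ 2 / 4 * (∑ x, H x j * d x) ^ 2 := by
    intro j
    have hdiff : (∑ x ∈ Finset.univ.filter (fun x => H x j = 1), p x)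
        - (∑ x ∈ Finset.univ.filter (fun x => H x j = 1), q x)
        = ∑ x ∈ Finset.univ.filter (fun x => H x j = 1), d x := by
      rw [Finset.sum_sub_distrib]
    have : (((exp ρ - 1) / (exp ρ + 1)) * (∑ x ∈ Finset.univ.filter fun x => H x j = 1, p x)
            + 1 / (exp ρ + 1)
          - (((exp ρ - 1) / (exp ρ + 1)) * (∑ x ∈ Finset.univ.filter fun x => H x j = 1, q x)
            + 1 / (exp ρ + 1)))
        = ((exp ρ - 1) / (exp ρ + 1)) * ((1 / 2) * ∑ x, H x j * d x) := by
      rw [← key j, ← hdiff]; ring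
    rw [this]; ring
  calc ∑ j, (((exp ρ - 1) / (exp ρ + 1)) * (∑ x ∈ Finset.univ.filter fun x => H x j = 1, p x)
            + 1 / (exp ρ + 1)
          - (((exp ρ - 1) / (exp ρ + 1)) * (∑ x ∈ Finset.univ.filter fun x => H x j = 1, q x)
            + 1 / (exp ρ + 1))) ^ 2
      = ∑ j, ((exp ρ - 1) / (exp ρ + 1)) ^ 2 / 4 * (∑ x, H x j * d x) ^ 2 :=
        Finset.sum_congr rfl fun j _ => hterm j
    _ = ((exp ρ - 1) / (exp ρ + 1)) ^ 2 / 4 * ∑ j, (∑ x, H x j * d x) ^ 2 := by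
        rw [← Finset.mul_sum]
    _ = ((exp ρ - 1) / (exp ρ + 1)) ^ 2 / 4 * ((K : ℝ) * ∑ x, d x ^ 2) := by rw [hsq]
    _ = (K : ℝ) * (exp ρ - 1) ^ 2 / (4 * (exp ρ + 1) ^ 2) * ∑ x, (p x - q x) ^ 2 := by
        simp only [hd]
        field_simp
end

section
/- Largest eigenvalue of random Rademacher outer products: let V̄_1,…,V̄_m be i.i.d. uniform on {−1/2, 1/2}^n and Ā_m = (1/m)·∑_{i=1}^m V̄_i V̄_iᵀ. There exist absolute constants c₂, c₃ > 0 (one may take c₂ = 425/32, c₃ = 8) such that P(λ_max(Ā_m) > c₂) ≤ exp(c₃·n − m/2). -/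
/-!
Write `Ā_m = m⁻¹ UᵀU`, where the rows of `U` are the `V̄_j`, so that `xᵀ Ā_m x = m⁻¹ ‖U x‖²`.
A maximal `1/4`-separated subset `N` of the unit sphere is a `1/4`-net, and comparing volumes of
disjoint balls gives `|N| ≤ 9ⁿ ≤ e^{8n}`. Approximating a unit vector by a point of `N` gives
`(3/4) ‖U‖ ≤ max_{y ∈ N} ‖U y‖`, so `λ_max(Ā_m) > 425/32` forces `‖U y‖² ≥ m` for some `y ∈ N`.

For a fixed unit `y`, `‖U y‖² = ∑_j ⟨V̄_j, y⟩²` is a sum of `m` i.i.d. terms. By Hoeffding's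
`cosh t ≤ exp (t² / 2)`, `⟨V̄, y⟩` is subgaussian with variance proxy `1/4`, and writing
`exp s² = E exp (√2 s g)` for a standard Gaussian `g` turns this into `E exp ⟨V̄, y⟩² ≤ √2`.
Markov's inequality gives `P(‖U y‖² ≥ m) ≤ e^{-m} 2^{m/2} ≤ e^{-m/2}`, and a union bound over `N`
concludes.
-/

open Matrix Finset MeasureTheory Metric Real Module ProbabilityTheory
open scoped ENNReal NNReal

section Packing

variable {E : Type*} [NormedAddCommGroup E] [NormedSpace ℝ E] [FiniteDimensional ℝ E]

theorem card_mul_pow_le_of_isSeparated_of_subset_closedBall {ε : ℝ≥0} (hε : 0 < ε)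
    {C : Finset E} (hC : (C : Set E) ⊆ closedBall 0 1) (hsep : IsSeparated ε (C : Set E)) :
    (C.card : ℝ) * (ε / 2) ^ finrank ℝ E ≤ (1 + ε / 2) ^ finrank ℝ E := by
  borelize E
  set μ : Measure E := Measure.addHaar
  have hr : (0 : ℝ) < ε / 2 := by positivity
  have hdisj : (C : Set E).PairwiseDisjoint fun x => ball x (ε / 2) := by
    intro x hx y hy hxy
    refine ball_disjoint_ball ?_
    have hxy' : (ε : ℝ≥0∞) < edist x y := hsep hx hy hxy
    rw [edist_nndist, ENNReal.coe_lt_coe, ← NNReal.coe_lt_coe, coe_nndist] at hxy'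
    linarith
  have hsub : (⋃ x ∈ C, ball x (ε / 2)) ⊆ ball (0 : E) (1 + ε / 2) := by
    simp only [Set.iUnion_subset_iff]
    intro x hx z hz
    have hx1 : dist x 0 ≤ 1 := hC hx
    rw [mem_ball] at hz ⊢
    linarith [dist_triangle z x 0]
  have hvol : ∑ x ∈ C, μ (ball x (ε / 2)) ≤ μ (ball (0 : E) (1 + ε / 2)) := by
    rw [← measure_biUnion_finset hdisj fun _ _ => measurableSet_ball]
    exact measure_mono hsub
  simp only [μ.addHaar_ball_of_pos _ hr,
    μ.addHaar_ball_of_pos _ (by positivity : (0 : ℝ) < 1 + ε / 2), sum_const, nsmul_eq_mul,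
    ← mul_assoc] at hvol
  rwa [ENNReal.mul_le_mul_iff_left (measure_ball_pos μ 0 one_pos).ne' measure_ball_lt_top.ne,
    ← ENNReal.ofReal_natCast, ← ENNReal.ofReal_mul (by positivity),
    ENNReal.ofReal_le_ofReal_iff (by positivity)] at hvol

theorem packingNumber_le_of_subset_closedBall {ε : ℝ≥0} (hε : 0 < ε) {A : Set E}
    (hA : A ⊆ closedBall 0 1) {K : ℕ} (hK : (1 + 2 / ε) ^ finrank ℝ E ≤ K) :
    packingNumber ε A ≤ K := by
  refine iSup₂_le fun C hCA => iSup_le fun hsep => ?_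
  by_contra! hC
  obtain ⟨D, hDC, hD⟩ := Set.exists_subset_encard_eq (Order.add_one_le_of_lt hC)
  have hDfin : D.Finite := Set.finite_of_encard_eq_coe hD
  have hcard := card_mul_pow_le_of_isSeparated_of_subset_closedBall hε (C := hDfin.toFinset)
    (by simpa using hDC.trans (hCA.trans hA)) (by simpa using hsep.subset hDC)
  rw [hDfin.encard_eq_coe_toFinset_card] at hD
  rw [show hDfin.toFinset.card = K + 1 by exact_mod_cast hD] at hcard
  have hε' : (0 : ℝ) < ε := hε
  have hsplit : (1 + ε / 2 : ℝ) ^ finrank ℝ E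
      = (1 + 2 / ε) ^ finrank ℝ E * (ε / 2) ^ finrank ℝ E := by
    rw [← mul_pow]; congr 1; field_simp; ring
  rw [hsplit] at hcard
  have := le_of_mul_le_mul_right hcard (by positivity)
  push_cast at this
  linarith

theorem exists_finset_isCover_sphere {ε : ℝ≥0} (hε : 0 < ε) {K : ℕ}
    (hK : (1 + 2 / ε) ^ finrank ℝ E ≤ K) :
    ∃ N : Finset E, N.card ≤ K ∧ (N : Set E) ⊆ sphere 0 1 ∧ IsCover ε (sphere 0 1) (N : Set E) := by
  have hpack := packingNumber_le_of_subset_closedBall hε sphere_subset_closedBall hK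
  have hfin : packingNumber ε (sphere (0 : E) 1) ≠ ⊤ := ne_top_of_le_ne_top (by simp) hpack
  have henc := encard_maximalSeparatedSet hfin ▸ hpack
  have hNfin := Set.finite_of_encard_le_coe henc
  refine ⟨hNfin.toFinset, ?_, by simpa using maximalSeparatedSet_subset,
    by simpa using isCover_maximalSeparatedSet hfin⟩
  rw [hNfin.encard_eq_coe_toFinset_card] at henc
  exact_mod_cast henc

end Packing

theorem ContinuousLinearMap.one_sub_mul_opNorm_le_of_isCover_sphere {E F : Type*}
    [NormedAddCommGroup E] [NormedSpace ℝ E] [SeminormedAddCommGroup F] [NormedSpace ℝ F]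
    (T : E →L[ℝ] F) {ε : ℝ≥0} {N : Set E} (hN : IsCover ε (sphere 0 1) N) {R : ℝ} (hR : 0 ≤ R)
    (hTN : ∀ y ∈ N, ‖T y‖ ≤ R) : (1 - ε) * ‖T‖ ≤ R := by
  suffices ‖T‖ ≤ R + ε * ‖T‖ by linarith
  refine T.opNorm_le_of_unit_norm (by positivity) fun x hx => ?_
  obtain ⟨y, hyN, hxy⟩ := Set.mem_iUnion₂.1 (isCover_iff_subset_iUnion_closedBall.1 hN
    (mem_sphere_zero_iff_norm.2 hx))
  calc ‖T x‖ ≤ ‖T y‖ + ‖T (x - y)‖ := by rw [map_sub]; exact norm_le_norm_add_norm_sub' _ _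
    _ ≤ R + ‖T‖ * ε := add_le_add (hTN y hyN) (T.le_opNorm_of_le (mem_closedBall_iff_norm.1 hxy))
    _ = R + ε * ‖T‖ := by ring

open scoped Matrix.Norms.L2Operator in
theorem Matrix.sum_mulVec_sq_le_l2_opNorm_sq {m n : Type*} [Fintype m] [Fintype n]
    [DecidableEq n] (A : Matrix m n ℝ) (x : n → ℝ) :
    ∑ i, (A *ᵥ x) i ^ 2 ≤ ‖A‖ ^ 2 * ∑ j, x j ^ 2 := by
  have hAx := EuclideanSpace.real_norm_sq_eq ((EuclideanSpace.equiv m ℝ).symm (A *ᵥ x))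
  simp only [PiLp.continuousLinearEquiv_symm_apply] at hAx
  rw [← EuclideanSpace.real_norm_sq_eq (WithLp.toLp 2 x), ← hAx, ← mul_pow]
  exact pow_le_pow_left₀ (norm_nonneg _) (A.l2_opNorm_mulVec (WithLp.toLp 2 x)) 2

theorem dotProduct_sum_vecMulVec_mulVec {ι κ R : Type*} [Fintype ι] [Fintype κ] [CommRing R]
    (u : κ → ι → R) (x : ι → R) :
    x ⬝ᵥ (∑ k, vecMulVec (u k) (u k)) *ᵥ x = ∑ k, (u k ⬝ᵥ x) ^ 2 := by
  simp only [sum_mulVec, dotProduct_sum, vecMulVec_mulVec, dotProduct_smul, op_smul_eq_mul]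
  exact sum_congr rfl fun k _ => by rw [dotProduct_comm, sq]

open scoped Matrix.Norms.L2Operator in
theorem exists_mem_le_sum_sq_dotProduct_of_isCover {ι κ : Type*} [Fintype ι] [DecidableEq ι]
    [Fintype κ] (u : κ → ι → ℝ) {ε : ℝ≥0} (hε : ε < 1) {N : Set (EuclideanSpace ℝ ι)}
    (hN : IsCover ε (sphere 0 1) N) {r c : ℝ} (hr : 0 ≤ r) (hc : 1 ≤ (1 - ε) ^ 2 * c)
    {x : ι → ℝ} (hx : c * ∑ i, x i ^ 2 < x ⬝ᵥ (r⁻¹ • ∑ k, vecMulVec (u k) (u k)) *ᵥ x) :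
    ∃ y ∈ N, r ≤ ∑ k, (u k ⬝ᵥ WithLp.ofLp y) ^ 2 := by
  by_contra! hN_small
  set U : Matrix κ ι ℝ := Matrix.of u
  have hε' : (0 : ℝ) < 1 - ε := by rw [sub_pos]; exact_mod_cast hε
  have hnet : (1 - ε) * ‖U‖ ≤ √r := by
    refine (toEuclideanLin.trans LinearMap.toContinuousLinearMap U
      ).one_sub_mul_opNorm_le_of_isCover_sphere hN (sqrt_nonneg r) fun y hy => ?_
    rw [le_sqrt (norm_nonneg _) hr, EuclideanSpace.real_norm_sq_eq]
    exact (hN_small y hy).le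
  have hc0 : 0 ≤ c := nonneg_of_mul_nonneg_right (zero_le_one.trans hc) (by positivity)
  have hU : ‖U‖ ^ 2 ≤ c * r := by
    have hnet2 : (1 - ε) ^ 2 * ‖U‖ ^ 2 ≤ r := by
      rw [← mul_pow, ← sq_sqrt hr]
      exact pow_le_pow_left₀ (by positivity) hnet 2
    calc ‖U‖ ^ 2 ≤ (1 - ε) ^ 2 * c * ‖U‖ ^ 2 := le_mul_of_one_le_left (sq_nonneg _) hc
      _ = c * ((1 - ε) ^ 2 * ‖U‖ ^ 2) := by ring
      _ ≤ c * r := mul_le_mul_of_nonneg_left hnet2 hc0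
  have hr_inv : r⁻¹ * ‖U‖ ^ 2 ≤ c := by
    calc r⁻¹ * ‖U‖ ^ 2 ≤ r⁻¹ * (c * r) := by gcongr
      _ ≤ c := by
        rw [mul_left_comm]
        exact mul_le_of_le_one_right hc0 (inv_mul_le_one_of_le₀ le_rfl hr)
  rw [smul_mulVec, dotProduct_smul, dotProduct_sum_vecMulVec_mulVec, smul_eq_mul] at hx
  refine hx.not_ge ?_
  calc r⁻¹ * ∑ k, (u k ⬝ᵥ x) ^ 2 ≤ r⁻¹ * (‖U‖ ^ 2 * ∑ i, x i ^ 2) :=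
        mul_le_mul_of_nonneg_left (U.sum_mulVec_sq_le_l2_opNorm_sq x) (inv_nonneg.2 hr)
    _ = r⁻¹ * ‖U‖ ^ 2 * ∑ i, x i ^ 2 := by ring
    _ ≤ c * ∑ i, x i ^ 2 :=
        mul_le_mul_of_nonneg_right hr_inv (sum_nonneg fun i _ => sq_nonneg _)

noncomputable def halfSign (b : Bool) : ℝ := if b then 1 / 2 else -(1 / 2)

theorem sum_exp_mul_halfSign_le (a : ℝ) :
    ∑ β : Bool, exp (halfSign β * a) ≤ 2 * exp (a ^ 2 / 8) := by
  have h := cosh_le_exp_half_sq (a / 2)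
  rw [cosh_eq] at h
  simp only [Fintype.sum_bool, halfSign, if_true, Bool.false_eq_true, if_false]
  calc exp (1 / 2 * a) + exp (-(1 / 2) * a) = 2 * ((exp (a / 2) + exp (-(a / 2))) / 2) := by
        ring_nf
    _ ≤ 2 * exp (a ^ 2 / 8) := by
        rw [show a ^ 2 / 8 = (a / 2) ^ 2 / 2 by ring]; linarith

theorem sum_exp_mul_halfSign_dotProduct_le {ι : Type*} [Fintype ι] [DecidableEq ι]
    (y : ι → ℝ) (s : ℝ) :
    ∑ b : ι → Bool, exp (s * ((halfSign ∘ b) ⬝ᵥ y))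
      ≤ 2 ^ Fintype.card ι * exp ((∑ i, y i ^ 2) / 4 * s ^ 2 / 2) := by
  have hprod : ∀ b : ι → Bool, exp (s * ((halfSign ∘ b) ⬝ᵥ y))
      = ∏ i, exp (halfSign (b i) * (s * y i)) := by
    intro b
    rw [← exp_sum, dotProduct, mul_sum]
    exact congrArg exp (sum_congr rfl fun i _ => by simp only [Function.comp_apply]; ring)
  calc ∑ b : ι → Bool, exp (s * ((halfSign ∘ b) ⬝ᵥ y))
      = ∏ i, ∑ β : Bool, exp (halfSign β * (s * y i)) := by
        simp only [hprod]
        exact (Fintype.prod_sum fun i (β : Bool) => exp (halfSign β * (s * y i))).symm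
    _ ≤ ∏ i, 2 * exp ((s * y i) ^ 2 / 8) :=
        prod_le_prod (fun i _ => by positivity) fun i _ => sum_exp_mul_halfSign_le _
    _ = 2 ^ Fintype.card ι * exp ((∑ i, y i ^ 2) / 4 * s ^ 2 / 2) := by
        rw [prod_mul_distrib, prod_const, card_univ, ← exp_sum, sum_div, sum_mul, sum_div]
        congr 2
        exact sum_congr rfl fun i _ => by ring

theorem exp_mul_sub_sq_div_two_eq (a g : ℝ) :
    exp (a * g - g ^ 2 / 2) = exp (a ^ 2 / 2) * exp (-(1 / 2) * (g - a) ^ 2) := by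
  rw [← exp_add]; ring_nf

theorem integrable_exp_mul_sub_sq_div_two (a : ℝ) :
    Integrable fun g : ℝ => exp (a * g - g ^ 2 / 2) := by
  simp only [exp_mul_sub_sq_div_two_eq a]
  exact ((integrable_exp_neg_mul_sq (by norm_num)).comp_sub_right a).const_mul _

theorem integral_exp_mul_sub_sq_div_two (a : ℝ) :
    ∫ g : ℝ, exp (a * g - g ^ 2 / 2) = √(2 * π) * exp (a ^ 2 / 2) := by
  simp only [exp_mul_sub_sq_div_two_eq a]
  rw [integral_const_mul, integral_sub_right_eq_self (fun g => exp (-(1 / 2) * g ^ 2)) a,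
    integral_gaussian, mul_comm]
  congr 2
  ring

theorem sum_exp_sq_le_of_sum_exp_mul_le {α : Type*} [Fintype α] (w : α → ℝ) {K v : ℝ}
    (hv : 2 * v < 1) (h : ∀ s, ∑ a, exp (s * w a) ≤ K * exp (v * s ^ 2 / 2)) :
    ∑ a, exp (w a ^ 2) ≤ K / √(1 - 2 * v) := by
  have hlin : ∀ a, exp (w a ^ 2) = (√(2 * π))⁻¹ * ∫ g, exp (√2 * w a * g - g ^ 2 / 2) := by
    intro a
    rw [integral_exp_mul_sub_sq_div_two, mul_pow, sq_sqrt zero_le_two,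
      inv_mul_cancel_left₀ (by positivity)]
    ring_nf
  have hpt : ∀ g : ℝ,
      ∑ a, exp (√2 * w a * g - g ^ 2 / 2) ≤ K * exp (-(1 / 2 - v) * g ^ 2) := by
    intro g
    calc ∑ a, exp (√2 * w a * g - g ^ 2 / 2)
        = (∑ a, exp ((√2 * g) * w a)) * exp (-(g ^ 2 / 2)) := by
          rw [sum_mul]
          exact sum_congr rfl fun a _ => by rw [← exp_add]; ring_nf
      _ ≤ K * exp (v * (√2 * g) ^ 2 / 2) * exp (-(g ^ 2 / 2)) := by gcongr; exact h _
      _ = K * exp (-(1 / 2 - v) * g ^ 2) := by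
          rw [mul_assoc, ← exp_add, mul_pow, sq_sqrt zero_le_two]; ring_nf
  calc ∑ a, exp (w a ^ 2) = (√(2 * π))⁻¹ * ∫ g, ∑ a, exp (√2 * w a * g - g ^ 2 / 2) := by
        rw [integral_finsetSum _ fun a _ => integrable_exp_mul_sub_sq_div_two _, mul_sum]
        exact sum_congr rfl fun a _ => hlin a
    _ ≤ (√(2 * π))⁻¹ * ∫ g, K * exp (-(1 / 2 - v) * g ^ 2) := by
        refine mul_le_mul_of_nonneg_left (integral_mono ?_ ?_ hpt) (by positivity)
        · exact integrable_finsetSum _ fun a _ => integrable_exp_mul_sub_sq_div_two _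
        · exact (integrable_exp_neg_mul_sq (by linarith)).const_mul _
    _ = K / √(1 - 2 * v) := by
        have h2v : 0 < 1 - 2 * v := by linarith
        rw [integral_const_mul, integral_gaussian,
          show π / (1 / 2 - v) = 2 * π / (1 - 2 * v) by field_simp, sqrt_div (by positivity)]
        field_simp

theorem PMF.toMeasure_uniformOfFintype_ge_le_exp_mul_sum_exp {α : Type*} [Fintype α]
    [Nonempty α] [MeasurableSpace α] [MeasurableSingletonClass α] (f : α → ℝ) (a : ℝ) :
    (PMF.uniformOfFintype α).toMeasure {x | a ≤ f x}
      ≤ ENNReal.ofReal (exp (-a) * (∑ x, exp (f x)) / Fintype.card α) := by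
  rw [← ofReal_measureReal]
  refine ENNReal.ofReal_le_ofReal
    ((measure_ge_le_exp_mul_mgf a zero_le_one .of_finite).trans_eq ?_)
  rw [mgf, PMF.integral_eq_sum]
  simp only [neg_mul, one_mul, PMF.uniformOfFintype_apply, ENNReal.toReal_inv,
    ENNReal.toReal_natCast, smul_eq_mul, ← mul_sum]
  ring

theorem sum_exp_sq_halfSign_dotProduct_le {ι : Type*} [Fintype ι] [DecidableEq ι] (y : ι → ℝ)
    (hy : ∑ i, y i ^ 2 = 1) :
    ∑ b : ι → Bool, exp (((halfSign ∘ b) ⬝ᵥ y) ^ 2) ≤ 2 ^ Fintype.card ι * √2 := by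
  refine (sum_exp_sq_le_of_sum_exp_mul_le _ (K := 2 ^ Fintype.card ι) (v := 1 / 4) (by norm_num)
    fun s => ?_).trans_eq ?_
  · simpa [hy] using sum_exp_mul_halfSign_dotProduct_le y s
  · rw [show (1 : ℝ) - 2 * (1 / 4) = 1 / 2 by norm_num, sqrt_div' _ zero_le_two, sqrt_one]
    field_simp

theorem toMeasure_uniformOfFintype_card_le_sum_sq_halfSign_dotProduct_le {ι κ : Type*}
    [Fintype ι] [DecidableEq ι] [Fintype κ] [DecidableEq κ] (y : ι → ℝ)
    (hy : ∑ i, y i ^ 2 = 1) :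
    (PMF.uniformOfFintype (κ → ι → Bool)).toMeasure
        {V | (Fintype.card κ : ℝ) ≤ ∑ j, ((halfSign ∘ V j) ⬝ᵥ y) ^ 2}
      ≤ ENNReal.ofReal (exp (-(Fintype.card κ / 2))) := by
  refine (PMF.toMeasure_uniformOfFintype_ge_le_exp_mul_sum_exp _ _).trans
    (ENNReal.ofReal_le_ofReal ?_)
  have hprod : ∑ V : κ → ι → Bool, exp (∑ j, ((halfSign ∘ V j) ⬝ᵥ y) ^ 2)
      = (∑ b : ι → Bool, exp (((halfSign ∘ b) ⬝ᵥ y) ^ 2)) ^ Fintype.card κ := by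
    simp only [exp_sum]
    rw [← Fintype.prod_sum fun (_ : κ) (b : ι → Bool) => exp (((halfSign ∘ b) ⬝ᵥ y) ^ 2),
      prod_const, card_univ]
  have hsqrt : √2 ≤ exp (1 / 2) :=
    (sqrt_le_iff.2 ⟨by norm_num, by norm_num⟩ : √2 ≤ 1 / 2 + 1).trans (add_one_le_exp _)
  rw [hprod, Fintype.card_fun, Fintype.card_fun, Fintype.card_bool]
  push_cast
  calc exp (-Fintype.card κ) * (∑ b : ι → Bool, exp (((halfSign ∘ b) ⬝ᵥ y) ^ 2)) ^ Fintype.card κ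
        / ((2 : ℝ) ^ Fintype.card ι) ^ Fintype.card κ
      ≤ exp (-Fintype.card κ) * (2 ^ Fintype.card ι * √2) ^ Fintype.card κ
        / ((2 : ℝ) ^ Fintype.card ι) ^ Fintype.card κ := by
        gcongr
        exact sum_exp_sq_halfSign_dotProduct_le y hy
    _ = exp (-Fintype.card κ) * √2 ^ Fintype.card κ := by
        rw [mul_pow]; field_simp
    _ ≤ exp (-Fintype.card κ) * exp (1 / 2) ^ Fintype.card κ := by gcongr
    _ = exp (-(Fintype.card κ / 2)) := by rw [← exp_nat_mul, ← exp_add]; ring_nf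

theorem toMeasure_uniformOfFintype_exists_mem_card_le_sum_sq_halfSign_dotProduct_le
    {ι κ : Type*} [Fintype ι] [DecidableEq ι] [Fintype κ] [DecidableEq κ]
    (N : Finset (EuclideanSpace ℝ ι)) (hN : (N : Set (EuclideanSpace ℝ ι)) ⊆ sphere 0 1) :
    (PMF.uniformOfFintype (κ → ι → Bool)).toMeasure
        {V | ∃ y ∈ N, (Fintype.card κ : ℝ) ≤ ∑ j, ((halfSign ∘ V j) ⬝ᵥ WithLp.ofLp y) ^ 2}
      ≤ N.card * ENNReal.ofReal (exp (-(Fintype.card κ / 2))) := by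
  set μ := (PMF.uniformOfFintype (κ → ι → Bool)).toMeasure
  calc μ _ ≤ ∑ y ∈ N,
        μ {V | (Fintype.card κ : ℝ) ≤ ∑ j, ((halfSign ∘ V j) ⬝ᵥ WithLp.ofLp y) ^ 2} :=
        (measure_mono (by rintro V ⟨y, hy, hV⟩; exact Set.mem_biUnion hy hV)).trans
          (measure_biUnion_finset_le _ _)
    _ ≤ ∑ _y ∈ N, ENNReal.ofReal (exp (-(Fintype.card κ / 2))) := by
        refine sum_le_sum fun y hy => ?_
        refine toMeasure_uniformOfFintype_card_le_sum_sq_halfSign_dotProduct_le _ ?_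
        rw [← EuclideanSpace.real_norm_sq_eq, mem_sphere_zero_iff_norm.1 (hN hy), one_pow]
    _ = N.card * ENNReal.ofReal (exp (-(Fintype.card κ / 2))) := by rw [sum_const, nsmul_eq_mul]

theorem lambda_max_random_outer_products_general (n m : ℕ) :
    (PMF.uniformOfFintype (Fin m → Fin n → Bool)).toMeasure
      {V | ∃ x : Fin n → ℝ,
        (425 / 32 : ℝ) * ∑ i, (x i) ^ 2
          < x ⬝ᵥ ((m : ℝ)⁻¹ • ∑ j,
              vecMulVec (fun i => if V j i then (1 / 2 : ℝ) else -(1 / 2))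
                (fun i => if V j i then (1 / 2 : ℝ) else -(1 / 2))) *ᵥ x}
      ≤ ENNReal.ofReal (Real.exp (8 * (n : ℝ) - (m : ℝ) / 2)) := by
  obtain ⟨N, hNcard, hNsphere, hN⟩ := exists_finset_isCover_sphere
    (E := EuclideanSpace ℝ (Fin n)) (ε := 1 / 4) (K := 9 ^ n) (by norm_num)
    (by rw [finrank_euclideanSpace_fin]; norm_num)
  have h9 : ((9 ^ n : ℕ) : ℝ) ≤ exp (8 * n) := by
    rw [mul_comm, exp_nat_mul]
    push_cast
    exact pow_le_pow_left₀ (by norm_num) (by linarith [add_one_le_exp 8]) n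
  calc _ ≤ (PMF.uniformOfFintype (Fin m → Fin n → Bool)).toMeasure
        {V | ∃ y ∈ N, (m : ℝ) ≤ ∑ j, ((halfSign ∘ V j) ⬝ᵥ WithLp.ofLp y) ^ 2} :=
        measure_mono <| Set.ofPred_subset_ofPred.2 fun V ⟨x, hx⟩ ↦
          exists_mem_le_sum_sq_dotProduct_of_isCover (fun j ↦ halfSign ∘ V j) (by norm_num) hN
            (Nat.cast_nonneg m) (by norm_num) hx
    _ ≤ N.card * ENNReal.ofReal (exp (-(m / 2))) := by
        simpa only [Fintype.card_fin] using
          toMeasure_uniformOfFintype_exists_mem_card_le_sum_sq_halfSign_dotProduct_le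
            (κ := Fin m) N hNsphere
    _ ≤ ENNReal.ofReal (exp (8 * n - m / 2)) := by
        rw [sub_eq_add_neg, exp_add, ENNReal.ofReal_mul (exp_pos _).le, ← ENNReal.ofReal_natCast]
        gcongr
        exact (Nat.cast_le.2 hNcard).trans h9

/-- Largest eigenvalue of random Rademacher outer products: for `V̄₁, …, V̄_m` i.i.d. uniform on
`{-1/2, 1/2}ⁿ` and `Ā_m = (1/m)·∑ V̄ᵢV̄ᵢᵀ`, we have `P(λ_max(Ā_m) > 425/32) ≤ exp(8n - m/2)`,
where `λ_max(Ā_m) > c` is expressed as the existence of a vector `x` with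
`xᵀĀ_m x > c·‖x‖₂²`. -/
theorem lambda_max_random_outer_products (n m : ℕ) (hn : 0 < n) (hm : 0 < m) :
    (PMF.uniformOfFintype (Fin m → Fin n → Bool)).toMeasure
      {V | ∃ x : Fin n → ℝ,
        (425 / 32 : ℝ) * ∑ i, (x i) ^ 2
          < x ⬝ᵥ ((m : ℝ)⁻¹ • ∑ j,
              vecMulVec (fun i => if V j i then (1 / 2 : ℝ) else -(1 / 2))
                (fun i => if V j i then (1 / 2 : ℝ) else -(1 / 2))) *ᵥ x}
      ≤ ENNReal.ofReal (Real.exp (8 * (n : ℝ) - (m : ℝ) / 2)) :=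
  lambda_max_random_outer_products_general n m
end
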